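/- For any three distinct elements a, b, c of X, at most one of the three relations ab⊥c, ac⊥b and bc⊥a holds. -/
import Mathlib


open Relation

variable {V : Type*}

/-- `u ⪯ v` : the reflexive–transitive closure of the arc relation `E`. -/
def preceq (E : V → V → Prop) : V → V → Prop := Relation.ReflTransGen E

/-- `u ≺ v` : `u ⪯ v` and `u ≠ v`. -/
def precLT (E : V → V → Prop) (u v : V) : Prop := preceq E u v ∧ u ≠ v

/-- the set of common ancestors of `a` and `b`. -/
def ca (E : V → V → Prop) (a b : V) : Set V := {v | preceq E v a ∧ preceq E v b}

/-- the set of most recent common ancestors of `a` and `b`: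
the maximal elements of `ca E a b` with respect to `⪯`. -/
def mrca (E : V → V → Prop) (a b : V) : Set V :=
  {v | v ∈ ca E a b ∧ ∀ w ∈ ca E a b, preceq E v w → v = w}

/-- the set of descendants of `v` lying in `X`. -/
def desc (E : V → V → Prop) (X : Set V) (v : V) : Set V := {x | x ∈ X ∧ preceq E v x}

/-- `D(=C)` : the vertices whose set of descendants in `X` is exactly `C`. -/
def Deq (E : V → V → Prop) (X C : Set V) : Set V := {v | desc E X v = C}

/-- `D(⊆C)` : the vertices all of whose descendants in `X` lie in `C`. -/
def Dsub (E : V → V → Prop) (X C : Set V) : Set V := {v | desc E X v ⊆ C}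

/-- `S` separates `A` from `B`: every path in the underlying undirected graph of
`E` from an element of `A` to an element of `B` passes through some element of `S`. -/
def Separates (E : V → V → Prop) (S A B : Set V) : Prop :=
  ∀ x ∈ A, ∀ y ∈ B, x ∉ S →
    ¬ Relation.ReflTransGen (fun u v => (E u v ∨ E v u) ∧ v ∉ S) x y

/-- `C` is a tight `X`-cluster: it is a nonempty subset of `X` such that
`D(=C)` separates `C` from `X − C`. -/
def TightCluster (E : V → V → Prop) (X C : Set V) : Prop :=
  C.Nonempty ∧ C ⊆ X ∧ Separates E (Deq E X C) C (X \ C)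

/-- adjacency in the cousinship graph `Γ(C)`. -/
def cousinAdj (E : V → V → Prop) (X C : Set V) (x y : V) : Prop :=
  x ≠ y ∧ x ∈ C ∧ y ∈ C ∧
    ∃ v ∈ Dsub E X C, x ∈ desc E X v ∧ y ∈ desc E X v

/-- `C` is a strict `X`-cluster. -/
def StrictCluster (E : V → V → Prop) (X C : Set V) : Prop :=
  C ⊆ X ∧
  (∀ v : V, (C ∩ desc E X v).Nonempty → C ⊆ desc E X v ∨ desc E X v ⊆ C) ∧
  (∀ x ∈ C, ∀ y ∈ C, Relation.ReflTransGen (cousinAdj E X C) x y)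

/-- the relation `ab‖c`. -/
def relPar (E : V → V → Prop) (a b c : V) : Prop :=
  (ca E a b).Nonempty ∧ ∀ v ∈ mrca E a b,
    (∃ v' ∈ mrca E a c, precLT E v' v) ∧ (∃ v'' ∈ mrca E b c, precLT E v'' v)

/-- the relation `ab|c`. -/
def relBar (E : V → V → Prop) (a b c : V) : Prop :=
  (ca E a b).Nonempty ∧ ∀ v ∈ mrca E a b,
    ∃ v' ∈ mrca E a c ∪ mrca E b c, precLT E v' v

/-- the relation `ab ⊥ c`. -/
def relPerp (E : V → V → Prop) (a b c : V) : Prop :=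
  (ca E a c).Nonempty ∧ (ca E b c).Nonempty ∧
  ∀ v ∈ mrca E a c, ∀ v' ∈ mrca E b c,
    ∃ u ∈ mrca E a b, ∃ u' ∈ mrca E a b, precLT E v u ∧ precLT E v' u'

/-- `C` is an ancestral `X`-cluster. -/
def AncestralCluster (E : V → V → Prop) (X C : Set V) : Prop :=
  C ⊆ X ∧ ∀ x ∈ C, ∀ x' ∈ C, ∀ y ∈ X \ C, relPar E x x' y

/-- `C` is a relaxed ancestral `X`-cluster. -/
def RelaxedAncestralCluster (E : V → V → Prop) (X C : Set V) : Prop :=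
  C ⊆ X ∧ ∀ x ∈ C, ∀ x' ∈ C, ∀ y ∈ X \ C, relBar E x x' y

/-- `C` is a co-ancestral `X`-cluster. -/
def CoAncestralCluster (E : V → V → Prop) (X C : Set V) : Prop :=
  C ⊆ X ∧ ∀ x ∈ C, ∀ x' ∈ C, ∀ y ∈ X \ C, relPerp E x x' y

/-- `C` is an Apresjan `X`-cluster relative to `T`. -/
def ApresjanCluster (E : V → V → Prop) (X : Set V) (T : V → ℝ) (C : Set V) : Prop :=
  C ⊆ X ∧ ∃ t : ℝ,
    (∀ x ∈ C, ∀ y ∈ C, ∃ v : V, preceq E v x ∧ preceq E v y ∧ t ≤ T v) ∧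
    (∀ x ∈ C, ∀ y ∈ X \ C, ∀ v : V, preceq E v x → preceq E v y → T v < t)

/-- `C` is a strong Apresjan `X`-cluster relative to `T`. -/
def StrongApresjanCluster (E : V → V → Prop) (X : Set V) (T : V → ℝ) (C : Set V) : Prop :=
  C ⊆ X ∧ ∃ t : ℝ,
    (∀ x ∈ C, ∀ y ∈ C, ∀ v ∈ mrca E x y, t ≤ T v) ∧
    (∀ x ∈ C, ∀ y ∈ X \ C, ∀ v : V, preceq E v x → preceq E v y → T v < t)

lemma ca_comm' (E : V → V → Prop) (a b : V) : ca E a b = ca E b a := by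
  ext v; exact and_comm

lemma mrca_comm' (E : V → V → Prop) (a b : V) : mrca E a b = mrca E b a := by
  unfold mrca; rw [ca_comm' E a b]

lemma preceq_transGen {E : V → V → Prop} {u v : V} (h : preceq E u v) (hne : u ≠ v) :
    Relation.TransGen E u v := by
  rcases Relation.ReflTransGen.cases_head h with rfl | ⟨w, hw, hwv⟩
  · exact absurd rfl hne
  · exact Relation.TransGen.head' hw hwv

lemma exists_mrca' [Fintype V] {E : V → V → Prop}
    (hacyc : Irreflexive (Relation.TransGen E)) {a b : V}
    (h : (ca E a b).Nonempty) : (mrca E a b).Nonempty := by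
  have : IsTrans V (fun x y => Relation.TransGen E y x) :=
    ⟨fun x y z hxy hyz => hyz.trans hxy⟩
  have : IsIrrefl V (fun x y => Relation.TransGen E y x) := ⟨fun x => hacyc x⟩
  have wf : WellFounded (fun x y => Relation.TransGen E y x) :=
    Finite.wellFounded_of_trans_of_irrefl _
  obtain ⟨v, hv, hmin⟩ := wf.has_min (ca E a b) h
  refine ⟨v, hv, fun w hw hvw => ?_⟩
  by_contra hne
  exact hmin w hw (preceq_transGen hvw hne)

lemma cycle_absurd' {E : V → V → Prop}
    (hacyc : Irreflexive (Relation.TransGen E)) {S T : Set V}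
    (hS : S.Nonempty)
    (hmaxS : ∀ v ∈ S, ∀ w ∈ S, preceq E v w → v = w)
    (hST : ∀ v ∈ S, ∃ u ∈ T, precLT E v u)
    (hTS : ∀ v ∈ T, ∃ u ∈ S, precLT E v u) : False := by
  obtain ⟨v, hv⟩ := hS
  obtain ⟨u, hu, huv, hneuv⟩ := hST v hv
  obtain ⟨w, hw, hwu, hnewu⟩ := hTS u hu
  have hvw : preceq E v w := huv.trans hwu
  have := hmaxS v hv w hw hvw
  subst this
  exact hacyc v ((preceq_transGen huv hneuv).trans (preceq_transGen hwu hnewu))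

/-- For any three distinct elements a, b, c of X, at most one of the
three relations ab⊥c, ac⊥b and bc⊥a holds. -/
theorem at_most_one_relPerp [Fintype V] (E : V → V → Prop) (X : Set V)
    (hacyc : Irreflexive (Relation.TransGen E))
    (a b c : V) (ha : a ∈ X) (hb : b ∈ X) (hc : c ∈ X)
    (hab : a ≠ b) (hac : a ≠ c) (hbc : b ≠ c) :
    ¬ (relPerp E a b c ∧ relPerp E a c b) ∧
    ¬ (relPerp E a b c ∧ relPerp E b c a) ∧
    ¬ (relPerp E a c b ∧ relPerp E b c a) := by
  have mmax : ∀ x y : V, ∀ v ∈ mrca E x y, ∀ w ∈ mrca E x y, preceq E v w → v = w :=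
    fun x y v hv w hw h => hv.2 w hw.1 h
  refine ⟨?_, ?_, ?_⟩
  · rintro ⟨⟨hcac1, hcbc, h1⟩, ⟨hcab, hccb, h2⟩⟩
    obtain ⟨v1, hv1⟩ := exists_mrca' hacyc hcbc
    obtain ⟨v2, hv2⟩ := exists_mrca' hacyc hccb
    refine cycle_absurd' hacyc (S := mrca E a c) (T := mrca E a b)
      (exists_mrca' hacyc hcac1) (mmax a c) ?_ ?_
    · intro v hv
      obtain ⟨u, hu, _, _, hvu, _⟩ := h1 v hv v1 hv1
      exact ⟨u, hu, hvu⟩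
    · intro v hv
      obtain ⟨u, hu, _, _, hvu, _⟩ := h2 v hv v2 hv2
      exact ⟨u, hu, hvu⟩
  · rintro ⟨⟨hcac, hcbc, h1⟩, ⟨hcba, hcca, h2⟩⟩
    obtain ⟨v1, hv1⟩ := exists_mrca' hacyc hcac
    obtain ⟨v2, hv2⟩ := exists_mrca' hacyc hcca
    refine cycle_absurd' hacyc (S := mrca E b c) (T := mrca E a b)
      (exists_mrca' hacyc hcbc) (mmax b c) ?_ ?_
    · intro v hv
      obtain ⟨u, hu, u', hu', _, hvu'⟩ := h1 v1 hv1 v hv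
      exact ⟨u', hu', hvu'⟩
    · intro v hv
      rw [mrca_comm' E a b] at hv
      obtain ⟨u, hu, _, _, hvu, _⟩ := h2 v hv v2 hv2
      exact ⟨u, hu, hvu⟩
  · rintro ⟨⟨hcab, hccb, h1⟩, ⟨hcba, hcca, h2⟩⟩
    obtain ⟨v1, hv1⟩ := exists_mrca' hacyc hcba
    obtain ⟨v2, hv2⟩ := exists_mrca' hacyc hcab
    have hSne : (mrca E a c).Nonempty := by
      rw [mrca_comm' E a c]; exact exists_mrca' hacyc hcca
    refine cycle_absurd' hacyc (S := mrca E a c) (T := mrca E b c)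
      hSne (mmax a c) ?_ ?_
    · intro v hv
      rw [mrca_comm' E a c] at hv
      obtain ⟨u, hu, u', hu', _, hvu'⟩ := h2 v1 hv1 v hv
      exact ⟨u', hu', hvu'⟩
    · intro v hv
      rw [mrca_comm' E b c] at hv
      obtain ⟨u, hu, u', hu', _, hvu'⟩ := h1 v2 hv2 v hv
      exact ⟨u', hu', hvu'⟩
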